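/- Fix 0 < δ < 1, τ > 0, κ = √(π/2), m ≥ 1, x ∈ ℝ^n, a matrix Φ ∈ ℂ^{m×n} and ε ∈ ℂ^m with ‖ε‖_∞ ≤ τ. Set A = Φ/√m and assume the deterministic events: |‖Φx‖₁/(κm) − ‖x‖| ≤ δ‖x‖, ‖Φx‖₂²/m ≤ (1+δ)‖x‖₂², and ‖Φx‖₁ = κm. Then the vector A_ε x, where A_ε has rows (Re α_ε)ᵀ, (Im α_ε)ᵀ and Im(diag(ε)* A) with α_ε = A* ε/(κ√m), satisfies ‖A_ε x‖₂ ≤ √2 · τ · (1+δ)/(1−δ). -/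

import Mathlib

/-!
The first two coordinates of `A_ε x` are the real and imaginary parts of
`⟨ε, Ax⟩ / (κ √m)`, so by Hölder they contribute at most `τ ‖Ax‖₁ / (κ √m) = τ`, because
`‖Φx‖₁ = κ m`. The last block contributes at most `τ² ‖Ax‖₂² ≤ τ² (1 + δ) ‖x‖²`. Finally the
first concentration event, again with `‖Φx‖₁ = κ m`, gives `‖x‖ (1 - δ) ≤ 1`.
-/

open Finset Matrix ComplexConjugate

section

variable {ι ι' : Type*} [Fintype ι] [Fintype ι']

theorem sq_sum_re_mul_add_sq_sum_im_mul (a : ι → ℂ) (x : ι → ℝ) :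
    (∑ j, (a j).re * x j) ^ 2 + (∑ j, (a j).im * x j) ^ 2 = ‖∑ j, a j * x j‖ ^ 2 := by
  simp only [Complex.sq_norm, Complex.normSq_apply, Complex.re_sum, Complex.im_sum,
    Complex.re_mul_ofReal, Complex.im_mul_ofReal]
  ring

theorem sum_conjTranspose_mulVec_mul_ofReal (A : Matrix ι ι' ℂ) (ε : ι → ℂ) (x : ι' → ℝ) :
    ∑ j, (∑ k, conj (A k j) * ε k) * (x j : ℂ) =
      ∑ k, ε k * conj ((A *ᵥ fun j => (x j : ℂ)) k) := by
  simp only [mulVec, dotProduct, map_sum, map_mul, Complex.conj_ofReal, sum_mul, mul_sum]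
  rw [sum_comm]
  exact sum_congr rfl fun k _ => sum_congr rfl fun j _ => by ring

variable {ε : ι → ℂ} {τ : ℝ}

theorem norm_sum_mul_conj_le (hε : ∀ k, ‖ε k‖ ≤ τ) (w : ι → ℂ) :
    ‖∑ k, ε k * conj (w k)‖ ≤ τ * ∑ k, ‖w k‖ := by
  rw [mul_sum]
  refine (norm_sum_le _ _).trans (sum_le_sum fun k _ => ?_)
  rw [norm_mul, Complex.norm_conj]
  exact mul_le_mul_of_nonneg_right (hε k) (norm_nonneg _)

theorem sum_sq_im_conj_mul_le (hε : ∀ k, ‖ε k‖ ≤ τ) (w : ι → ℂ) :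
    ∑ k, (conj (ε k) * w k).im ^ 2 ≤ τ ^ 2 * ∑ k, ‖w k‖ ^ 2 := by
  rw [mul_sum]
  refine sum_le_sum fun k _ => ?_
  calc (conj (ε k) * w k).im ^ 2 ≤ ‖conj (ε k) * w k‖ ^ 2 := by
        rw [← sq_abs]; gcongr; exact Complex.abs_im_le_norm _
    _ = ‖ε k‖ ^ 2 * ‖w k‖ ^ 2 := by rw [norm_mul, Complex.norm_conj, mul_pow]
    _ ≤ τ ^ 2 * ‖w k‖ ^ 2 := by gcongr; exact hε k

end

theorem one_add_mul_sq_le_two_mul_sq {δ N : ℝ} (hδ0 : 0 ≤ δ) (hδ1 : δ < 1) (hN0 : 0 ≤ N)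
    (hN : N * (1 - δ) ≤ 1) :
    1 + (1 + δ) * N ^ 2 ≤ 2 * ((1 + δ) / (1 - δ)) ^ 2 := by
  have hpos : 0 < 1 - δ := by linarith
  have hr1 : 1 ≤ (1 + δ) / (1 - δ) := by rw [le_div_iff₀ hpos]; linarith
  have hNr : (1 + δ) * N ≤ (1 + δ) / (1 - δ) := by
    rw [le_div_iff₀ hpos, mul_assoc]; nlinarith
  nlinarith [mul_le_mul hNr hNr (by positivity) (by positivity)]

open Finset in
theorem noise_matrix_bound_general {m n : ℕ} (δ τ κ : ℝ)
    (hδ0 : 0 < δ) (hδ1 : δ < 1) (hτ : 0 < τ)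
    (x : Fin n → ℝ) (Φ : Matrix (Fin m) (Fin n) ℂ) (ε : Fin m → ℂ)
    (hε : ∀ k, ‖ε k‖ ≤ τ)
    (A : Matrix (Fin m) (Fin n) ℂ) (hA : A = ((1 / Real.sqrt m : ℝ) : ℂ) • Φ)
    (hconc1 : |(∑ k, ‖Φ.mulVec (fun j => (x j : ℂ)) k‖) / (κ * m) -
        Real.sqrt (∑ j, x j ^ 2)| ≤ δ * Real.sqrt (∑ j, x j ^ 2))
    (hconc2 : (∑ k, ‖Φ.mulVec (fun j => (x j : ℂ)) k‖ ^ 2) / m ≤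
        (1 + δ) * ∑ j, x j ^ 2)
    (hnorm : ∑ k, ‖Φ.mulVec (fun j => (x j : ℂ)) k‖ = κ * m)
    (αε : Fin n → ℂ)
    (hα : αε = fun j => (∑ k, (starRingEnd ℂ) (A k j) * ε k) / ((κ * Real.sqrt m : ℝ) : ℂ)) :
    Real.sqrt ((∑ j, (αε j).re * x j) ^ 2 + (∑ j, (αε j).im * x j) ^ 2 +
        ∑ k, ((starRingEnd ℂ) (ε k) * A.mulVec (fun j => (x j : ℂ)) k).im ^ 2) ≤
      Real.sqrt 2 * τ * (1 + δ) / (1 - δ) := by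
  set v := Φ *ᵥ fun j => (x j : ℂ)
  set w := A *ᵥ fun j => (x j : ℂ)
  set N := Real.sqrt (∑ j, x j ^ 2)
  have hw : ∀ k, ‖w k‖ = ‖v k‖ / Real.sqrt m := fun k => by
    simp [w, v, hA, smul_mulVec, div_eq_inv_mul]
  have hw1 : ∑ k, ‖w k‖ = κ * Real.sqrt m := by
    simp_rw [hw, ← sum_div, hnorm, mul_div_assoc, Real.div_sqrt]
  have hw2 : ∑ k, ‖w k‖ ^ 2 ≤ (1 + δ) * N ^ 2 := by
    simp_rw [hw, div_pow, Real.sq_sqrt (Nat.cast_nonneg _), ← sum_div]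
    rwa [Real.sq_sqrt (by positivity)]
  have hN : N * (1 - δ) ≤ 1 := by
    rw [hnorm] at hconc1
    linarith [(abs_le.1 hconc1).1, div_self_le_one (κ * m)]
  have hz : ‖∑ j, αε j * x j‖ ≤ τ := by
    simp only [hα, div_mul_eq_mul_div, ← sum_div, sum_conjTranspose_mulVec_mul_ofReal,
      norm_div, Complex.norm_real, Real.norm_eq_abs]
    calc _ ≤ τ * (κ * Real.sqrt m) / |κ * Real.sqrt m| := by
          rw [← hw1]; gcongr; exact norm_sum_mul_conj_le hε w
      _ ≤ τ := by
          rw [mul_div_assoc]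
          exact mul_le_of_le_one_right hτ.le (div_le_one_of_le₀ (le_abs_self _) (abs_nonneg _))
  have hQ := (sum_sq_im_conj_mul_le hε w).trans (mul_le_mul_of_nonneg_left hw2 (sq_nonneg τ))
  rw [sq_sum_re_mul_add_sq_sum_im_mul, Real.sqrt_le_left (by positivity)]
  have hz2 := pow_le_pow_left₀ (norm_nonneg _) hz 2
  calc _ ≤ τ ^ 2 * (1 + (1 + δ) * N ^ 2) := by linarith
    _ ≤ τ ^ 2 * (2 * ((1 + δ) / (1 - δ)) ^ 2) := by
        gcongr; exact one_add_mul_sq_le_two_mul_sq hδ0.le hδ1 (Real.sqrt_nonneg _) hN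
    _ = _ := by rw [mul_div_assoc, mul_pow, mul_pow, Real.sq_sqrt zero_le_two]; ring

open Finset in
theorem noise_matrix_bound {m n : ℕ} (hm : 1 ≤ m) (δ τ κ : ℝ)
    (hδ0 : 0 < δ) (hδ1 : δ < 1) (hτ : 0 < τ) (hκ : κ = Real.sqrt (Real.pi / 2))
    (x : Fin n → ℝ) (Φ : Matrix (Fin m) (Fin n) ℂ) (ε : Fin m → ℂ)
    (hε : ∀ k, ‖ε k‖ ≤ τ)
    (A : Matrix (Fin m) (Fin n) ℂ) (hA : A = ((1 / Real.sqrt m : ℝ) : ℂ) • Φ)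
    (hconc1 : |(∑ k, ‖Φ.mulVec (fun j => (x j : ℂ)) k‖) / (κ * m) -
        Real.sqrt (∑ j, x j ^ 2)| ≤ δ * Real.sqrt (∑ j, x j ^ 2))
    (hconc2 : (∑ k, ‖Φ.mulVec (fun j => (x j : ℂ)) k‖ ^ 2) / m ≤
        (1 + δ) * ∑ j, x j ^ 2)
    (hnorm : ∑ k, ‖Φ.mulVec (fun j => (x j : ℂ)) k‖ = κ * m)
    (αε : Fin n → ℂ)
    (hα : αε = fun j => (∑ k, (starRingEnd ℂ) (A k j) * ε k) / ((κ * Real.sqrt m : ℝ) : ℂ)) :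
    Real.sqrt ((∑ j, (αε j).re * x j) ^ 2 + (∑ j, (αε j).im * x j) ^ 2 +
        ∑ k, ((starRingEnd ℂ) (ε k) * A.mulVec (fun j => (x j : ℂ)) k).im ^ 2) ≤
      Real.sqrt 2 * τ * (1 + δ) / (1 - δ) :=
  noise_matrix_bound_general δ τ κ hδ0 hδ1 hτ x Φ ε hε A hA hconc1 hconc2 hnorm αε hα
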